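/- Let λ > 0 and n ≥ 1. There exists a constant C > 0 (depending only on λ and n) such that for every z ∈ ℝ^{2n} with 0 < |z| ≤ 1/(2λ) and all i, j ∈ {1, …, 2n}, the second partial derivatives of u_λ satisfy |∂²u_λ/∂z_i ∂z_j (z)| ≤ C |z|; consequently |∂²u_λ/∂z_i ∂z_j (z)| ≤ C |∇u_λ(z) + F(z)|. -/

import Mathlib

open Real

/-- Profile function of the Pansu sphere `𝕊_λ` of mean curvature `λ`. -/
noncomputable def pansuProfile (lam s : ℝ) : ℝ :=
  (1 / (2 * lam ^ 2)) * (lam * s * Real.sqrt (1 - lam ^ 2 * s ^ 2) + Real.arccos (lam * s))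

/-- The function `u_λ(z) = f_λ(|z|)` whose graph is the upper half of the Pansu sphere. -/
noncomputable def pansuGraph (lam : ℝ) (n : ℕ) (z : EuclideanSpace ℝ (Fin (2 * n))) : ℝ :=
  pansuProfile lam ‖z‖

/-- The linear map `F(x₁, y₁, …, x_n, y_n) = (−y₁, x₁, …, −y_n, x_n)` on `ℝ^{2n}`. -/
def Fmap (n : ℕ) (z : EuclideanSpace ℝ (Fin (2 * n))) : EuclideanSpace ℝ (Fin (2 * n)) :=
  WithLp.toLp 2 (fun i : Fin (2 * n) => if h : (i : ℕ) % 2 = 0 then -z ⟨(i : ℕ) + 1, by omega⟩ else z ⟨(i : ℕ) - 1, by omega⟩)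

/-!
Write `u_λ(z) = φ(|z|²)` with `φ(t) = f_λ(√t)`. For such a radial function the Hessian is
`2 φ'(|z|²) ⟨v, w⟩ + 4 φ''(|z|²) ⟨z, v⟩ ⟨z, w⟩`, and here `2 φ'(r²) = -λr / √(1 - λ²r²)` and
`4 φ''(r²) = -λ / (r (1 - λ²r²)^{3/2})`, so both terms are `O(λ|z|)` once `λ|z| ≤ 1/2`.
The gradient `2 φ'(|z|²) z` is parallel to `z`, whereas `F` is a rotation with `⟨z, F z⟩ = 0`;
hence `|∇u_λ(z) + F z| ≥ |F z| = |z|`, and the second bound follows from the first.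
-/

open Filter Topology RealInnerProductSpace

section RadialFunctions

variable {E : Type*} [NormedAddCommGroup E] [InnerProductSpace ℝ E]

theorem hasFDerivAt_comp_norm_sq {φ : ℝ → ℝ} {d : ℝ} {z : E} (h : HasDerivAt φ d (‖z‖ ^ 2)) :
    HasFDerivAt (fun y : E => φ (‖y‖ ^ 2)) ((2 * d) • innerSL ℝ z) z := by
  refine (h.comp_hasFDerivAt z (hasStrictFDerivAt_norm_sq z).hasFDerivAt).congr_fderiv ?_
  ext v
  simp only [smul_apply, smul_eq_mul, nsmul_eq_mul]
  ring

theorem hasGradientAt_comp_norm_sq [CompleteSpace E] {φ : ℝ → ℝ} {d : ℝ} {z : E}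
    (h : HasDerivAt φ d (‖z‖ ^ 2)) :
    HasGradientAt (fun y : E => φ (‖y‖ ^ 2)) ((2 * d) • z) z := by
  rw [hasGradientAt_iff_hasFDerivAt, map_smul]
  exact hasFDerivAt_comp_norm_sq h

theorem iteratedFDeriv_two_comp_norm_sq_apply {φ φ' : ℝ → ℝ} {d₂ : ℝ} {z : E}
    (hφ : ∀ᶠ t in 𝓝 (‖z‖ ^ 2), HasDerivAt φ (φ' t) t) (hφ' : HasDerivAt φ' d₂ (‖z‖ ^ 2))
    (v w : E) :
    iteratedFDeriv ℝ 2 (fun y : E => φ (‖y‖ ^ 2)) z ![v, w] =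
      2 * φ' (‖z‖ ^ 2) * ⟪v, w⟫ + 4 * d₂ * ⟪z, v⟫ * ⟪z, w⟫ := by
  have hfderiv : fderiv ℝ (fun y : E => φ (‖y‖ ^ 2)) =ᶠ[𝓝 z]
      fun y => (2 * φ' (‖y‖ ^ 2)) • innerSL ℝ y := by
    filter_upwards [((continuous_norm.pow 2).tendsto z).eventually hφ] with y hy
    exact (hasFDerivAt_comp_norm_sq hy).fderiv
  have hsecond := (((hφ'.const_mul 2).comp_hasFDerivAt z
    (hasStrictFDerivAt_norm_sq z).hasFDerivAt).smul
      (innerSL ℝ).hasFDerivAt).congr_of_eventuallyEq hfderiv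
  rw [iteratedFDeriv_two_apply, hsecond.fderiv]
  simp only [add_apply, smul_apply, ContinuousLinearMap.smulRight_apply, Matrix.cons_val_zero,
    Matrix.cons_val_one, Function.comp_apply, smul_eq_mul, nsmul_eq_mul]
  rw [innerSL_apply_apply, innerSL_apply_apply, innerSL_apply_apply]
  push_cast
  ring

end RadialFunctions

theorem hasDerivAt_pansuProfile {lam s : ℝ} (hlam : lam ≠ 0) (h : lam ^ 2 * s ^ 2 < 1) :
    HasDerivAt (pansuProfile lam) (-lam * s ^ 2 / √(1 - lam ^ 2 * s ^ 2)) s := by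
  have hpos : 0 < 1 - lam ^ 2 * s ^ 2 := by linarith
  obtain ⟨hneg_one_lt, hlt_one⟩ : -1 < lam * s ∧ lam * s < 1 := by
    rw [← abs_lt, ← sq_lt_one_iff_abs_lt_one, mul_pow]
    exact h
  have hlin : HasDerivAt (fun s => lam * s) lam s := by
    simpa using (hasDerivAt_id s).const_mul lam
  have hrad : HasDerivAt (fun s => 1 - lam ^ 2 * s ^ 2) (-(lam ^ 2 * (2 * s))) s := by
    simpa using ((hasDerivAt_pow 2 s).const_mul (lam ^ 2)).const_sub 1
  have harccos := (Real.hasDerivAt_arccos hneg_one_lt.ne' hlt_one.ne).comp s hlin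
  have hsum := ((hlin.mul (hrad.sqrt hpos.ne')).add harccos).const_mul (1 / (2 * lam ^ 2))
  refine hsum.congr_deriv ?_
  rw [mul_pow]
  field_simp
  rw [Real.sq_sqrt hpos.le]
  ring

noncomputable def pansuProfileSqrtDeriv (lam t : ℝ) : ℝ :=
  -lam * √t / (2 * √(1 - lam ^ 2 * t))

theorem hasDerivAt_pansuProfile_sqrt {lam t : ℝ} (hlam : lam ≠ 0) (ht : 0 < t)
    (h : lam ^ 2 * t < 1) :
    HasDerivAt (fun t => pansuProfile lam √t) (pansuProfileSqrtDeriv lam t) t := by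
  have hsq : √t ^ 2 = t := Real.sq_sqrt ht.le
  have hsqrt_pos : 0 < √t := Real.sqrt_pos.2 ht
  have hcomp := (hasDerivAt_pansuProfile hlam (by rwa [hsq])).comp t
    (Real.hasDerivAt_sqrt ht.ne')
  refine hcomp.congr_deriv ?_
  rw [hsq, pansuProfileSqrtDeriv]
  field_simp
  rw [hsq]

theorem hasDerivAt_pansuProfileSqrtDeriv {lam t : ℝ} (ht : 0 < t) (h : lam ^ 2 * t < 1) :
    HasDerivAt (pansuProfileSqrtDeriv lam) (-lam / (4 * √t * √(1 - lam ^ 2 * t) ^ 3)) t := by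
  have hpos : 0 < 1 - lam ^ 2 * t := by linarith
  have hsqrt_pos : 0 < √t := Real.sqrt_pos.2 ht
  have hroot_pos : 0 < √(1 - lam ^ 2 * t) := Real.sqrt_pos.2 hpos
  have hlin : HasDerivAt (fun t => 1 - lam ^ 2 * t) (-(lam ^ 2 * 1)) t := by
    simpa using ((hasDerivAt_id t).const_mul (lam ^ 2)).const_sub 1
  have hquot := ((Real.hasDerivAt_sqrt ht.ne').const_mul (-lam)).div
    ((hlin.sqrt hpos.ne').const_mul 2) (by positivity)
  refine hquot.congr_deriv ?_
  field_simp
  rw [Real.sq_sqrt ht.le, Real.sq_sqrt hpos.le]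
  ring

theorem two_mul_pansuProfileSqrtDeriv_sq (lam : ℝ) {r : ℝ} (hr : 0 ≤ r) :
    2 * pansuProfileSqrtDeriv lam (r ^ 2) = -(lam * r / √(1 - lam ^ 2 * r ^ 2)) := by
  rw [pansuProfileSqrtDeriv, Real.sqrt_sq hr]
  ring

theorem pansuGraph_eq_comp_norm_sq (lam : ℝ) (n : ℕ) :
    pansuGraph lam n = fun y => pansuProfile lam √(‖y‖ ^ 2) :=
  funext fun y => by rw [Real.sqrt_sq (norm_nonneg y), pansuGraph]

section PansuGraph

variable {lam : ℝ} {n : ℕ} {z : EuclideanSpace ℝ (Fin (2 * n))}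

theorem gradient_pansuGraph (hlam : lam ≠ 0) (hz : 0 < ‖z‖) (h : lam ^ 2 * ‖z‖ ^ 2 < 1) :
    gradient (pansuGraph lam n) z = -(lam * ‖z‖ / √(1 - lam ^ 2 * ‖z‖ ^ 2)) • z := by
  rw [pansuGraph_eq_comp_norm_sq, ← two_mul_pansuProfileSqrtDeriv_sq lam (norm_nonneg z)]
  exact (hasGradientAt_comp_norm_sq
    (hasDerivAt_pansuProfile_sqrt hlam (by positivity) h)).gradient

theorem iteratedFDeriv_two_pansuGraph_apply (hlam : lam ≠ 0) (hz : 0 < ‖z‖)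
    (h : lam ^ 2 * ‖z‖ ^ 2 < 1) (v w : EuclideanSpace ℝ (Fin (2 * n))) :
    iteratedFDeriv ℝ 2 (pansuGraph lam n) z ![v, w] =
      -(lam * ‖z‖ / √(1 - lam ^ 2 * ‖z‖ ^ 2)) * ⟪v, w⟫
        - lam / (‖z‖ * √(1 - lam ^ 2 * ‖z‖ ^ 2) ^ 3) * ⟪z, v⟫ * ⟪z, w⟫ := by
  have hderiv : ∀ᶠ t in 𝓝 (‖z‖ ^ 2),
      HasDerivAt (fun t => pansuProfile lam √t) (pansuProfileSqrtDeriv lam t) t := by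
    filter_upwards [lt_mem_nhds (by positivity : (0 : ℝ) < ‖z‖ ^ 2),
      (continuousAt_const.mul continuousAt_id).eventually_lt continuousAt_const h] with t ht ht'
    exact hasDerivAt_pansuProfile_sqrt hlam ht ht'
  rw [pansuGraph_eq_comp_norm_sq, iteratedFDeriv_two_comp_norm_sq_apply hderiv
    (hasDerivAt_pansuProfileSqrtDeriv (by positivity) h),
    two_mul_pansuProfileSqrtDeriv_sq lam (norm_nonneg z), Real.sqrt_sq (norm_nonneg z)]
  ring

theorem abs_iteratedFDeriv_two_pansuGraph_le (hlam : 0 < lam) (hz : 0 < ‖z‖)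
    (hhalf : lam * ‖z‖ ≤ 1 / 2) (v w : EuclideanSpace ℝ (Fin (2 * n))) :
    |iteratedFDeriv ℝ 2 (pansuGraph lam n) z ![v, w]| ≤ 10 * lam * ‖z‖ * ‖v‖ * ‖w‖ := by
  have h : lam ^ 2 * ‖z‖ ^ 2 < 1 := by nlinarith [mul_pos hlam hz]
  rw [iteratedFDeriv_two_pansuGraph_apply hlam.ne' hz h]
  set r := ‖z‖
  set S := √(1 - lam ^ 2 * r ^ 2)
  have hS : 1 / 2 ≤ S := Real.le_sqrt_of_sq_le (by nlinarith [mul_pos hlam hz])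
  have hS₁ : 1 / S ≤ 2 := by rw [div_le_iff₀ (by positivity)]; linarith
  have hS₃ : 1 / S ^ 3 ≤ 8 := by
    rw [div_le_iff₀ (by positivity)]
    nlinarith [pow_le_pow_left₀ (by norm_num) hS 3]
  calc _ ≤ lam * r / S * (‖v‖ * ‖w‖) + lam / (r * S ^ 3) * ((r * ‖v‖) * (r * ‖w‖)) := by
        refine (abs_sub _ _).trans (add_le_add ?_ ?_)
        · rw [abs_mul, abs_neg, abs_of_nonneg (by positivity)]
          gcongr
          exact abs_real_inner_le_norm v w
        · rw [abs_mul, abs_mul, abs_of_nonneg (by positivity), mul_assoc]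
          gcongr
          · exact abs_real_inner_le_norm z v
          · exact abs_real_inner_le_norm z w
    _ = lam * r * (1 / S + 1 / S ^ 3) * ‖v‖ * ‖w‖ := by field_simp
    _ ≤ lam * r * (2 + 8) * ‖v‖ * ‖w‖ := by gcongr
    _ = 10 * lam * r * ‖v‖ * ‖w‖ := by ring

end PansuGraph

def pairPartner (n : ℕ) (i : Fin (2 * n)) : Fin (2 * n) :=
  if h : (i : ℕ) % 2 = 0 then ⟨i + 1, by omega⟩ else ⟨i - 1, by omega⟩

theorem val_pairPartner {n : ℕ} (i : Fin (2 * n)) :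
    (pairPartner n i : ℕ) = if (i : ℕ) % 2 = 0 then (i : ℕ) + 1 else (i : ℕ) - 1 := by
  unfold pairPartner
  split_ifs <;> rfl

theorem pairPartner_even_iff {n : ℕ} (i : Fin (2 * n)) :
    (pairPartner n i : ℕ) % 2 = 0 ↔ ¬(i : ℕ) % 2 = 0 := by
  rw [val_pairPartner]
  split_ifs <;> omega

theorem pairPartner_involutive (n : ℕ) : Function.Involutive (pairPartner n) := by
  intro i
  ext
  rw [val_pairPartner, val_pairPartner]
  split_ifs <;> omega

theorem sum_comp_pairPartner {M : Type*} [AddCommMonoid M] (n : ℕ) (f : Fin (2 * n) → M) :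
    ∑ i, f (pairPartner n i) = ∑ i, f i :=
  Equiv.sum_comp (pairPartner_involutive n).toPerm f

theorem Fmap_apply (n : ℕ) (z : EuclideanSpace ℝ (Fin (2 * n))) (i : Fin (2 * n)) :
    Fmap n z i = if (i : ℕ) % 2 = 0 then -z (pairPartner n i) else z (pairPartner n i) := by
  unfold Fmap pairPartner
  dsimp only
  split_ifs <;> rfl

theorem norm_Fmap (n : ℕ) (z : EuclideanSpace ℝ (Fin (2 * n))) : ‖Fmap n z‖ = ‖z‖ := by
  simp only [EuclideanSpace.norm_eq, ← sum_comp_pairPartner n (fun i => ‖z i‖ ^ 2), Fmap_apply]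
  congr 1
  refine Finset.sum_congr rfl fun i _ => ?_
  split_ifs <;> simp

theorem inner_Fmap_eq_zero (n : ℕ) (z : EuclideanSpace ℝ (Fin (2 * n))) :
    ⟪z, Fmap n z⟫ = 0 := by
  let a : Fin (2 * n) → ℝ := fun i => Fmap n z i * z i
  have hanti : ∀ i, a (pairPartner n i) = -a i := by
    intro i
    have hparity := pairPartner_even_iff i
    simp only [a, Fmap_apply, pairPartner_involutive n i]
    split_ifs <;> first | (exfalso; tauto) | ring
  have hsum := sum_comp_pairPartner n a
  simp only [hanti, Finset.sum_neg_distrib] at hsum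
  simp only [PiLp.inner_apply, RCLike.inner_apply, conj_trivial]
  linarith

theorem norm_le_norm_smul_add_Fmap {n : ℕ} (c : ℝ) (z : EuclideanSpace ℝ (Fin (2 * n))) :
    ‖z‖ ≤ ‖c • z + Fmap n z‖ := by
  have hsq : ‖c • z + Fmap n z‖ ^ 2 = c ^ 2 * ‖z‖ ^ 2 + ‖z‖ ^ 2 := by
    rw [norm_add_sq_real, inner_smul_left, inner_Fmap_eq_zero, norm_Fmap, norm_smul, mul_pow,
      Real.norm_eq_abs, sq_abs]
    simp
  exact le_of_sq_le_sq (by nlinarith [sq_nonneg (c * ‖z‖)]) (norm_nonneg _)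

theorem pansuGraph_second_derivs_bound_general (lam : ℝ) (hlam : 0 < lam) (n : ℕ) :
    ∃ C : ℝ, 0 < C ∧
      ∀ z : EuclideanSpace ℝ (Fin (2 * n)), 0 < ‖z‖ → ‖z‖ ≤ 1 / (2 * lam) →
        ∀ i j : Fin (2 * n),
          |iteratedFDeriv ℝ 2 (pansuGraph lam n) z
              ![EuclideanSpace.single i 1, EuclideanSpace.single j 1]| ≤ C * ‖z‖ ∧
          |iteratedFDeriv ℝ 2 (pansuGraph lam n) z
              ![EuclideanSpace.single i 1, EuclideanSpace.single j 1]| ≤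
            C * ‖gradient (pansuGraph lam n) z + Fmap n z‖ := by
  refine ⟨10 * lam, by positivity, fun z hz hzle i j => ?_⟩
  have hhalf : lam * ‖z‖ ≤ 1 / 2 := by
    rw [le_div_iff₀ (by positivity)] at hzle
    linarith
  have hbound := abs_iteratedFDeriv_two_pansuGraph_le hlam hz hhalf
    (EuclideanSpace.single i 1) (EuclideanSpace.single j 1)
  simp only [PiLp.norm_single, norm_one, mul_one] at hbound
  refine ⟨hbound, hbound.trans ?_⟩
  rw [gradient_pansuGraph hlam.ne' hz (by nlinarith [mul_pos hlam hz])]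
  gcongr
  exact norm_le_norm_smul_add_Fmap _ z

/-- For `λ > 0` and `n ≥ 1` there is `C > 0` such that for `0 < |z| ≤ 1/(2λ)` all second
partial derivatives of `u_λ` satisfy `|u_{ij}(z)| ≤ C|z|`, and consequently
`|u_{ij}(z)| ≤ C|∇u_λ(z) + F(z)|`. -/
theorem pansuGraph_second_derivs_bound (lam : ℝ) (hlam : 0 < lam) (n : ℕ) (hn : 1 ≤ n) :
    ∃ C : ℝ, 0 < C ∧
      ∀ z : EuclideanSpace ℝ (Fin (2 * n)), 0 < ‖z‖ → ‖z‖ ≤ 1 / (2 * lam) →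
        ∀ i j : Fin (2 * n),
          |iteratedFDeriv ℝ 2 (pansuGraph lam n) z
              ![EuclideanSpace.single i 1, EuclideanSpace.single j 1]| ≤ C * ‖z‖ ∧
          |iteratedFDeriv ℝ 2 (pansuGraph lam n) z
              ![EuclideanSpace.single i 1, EuclideanSpace.single j 1]| ≤
            C * ‖gradient (pansuGraph lam n) z + Fmap n z‖ :=
  pansuGraph_second_derivs_bound_general lam hlam n
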